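/- Let ε ∈ (0,1), δ ∈ (0, 1/e], K ≥ 1 an integer, c_ε ≥ 1, and 0 < Δ ≤ 1. If t satisfies (1/t)·log(c_ε·K·log((1+ε)·t)/δ) ≥ Δ²/(2(1+ε)(1+√ε)²), then t ≤ (2(1+ε)(1+√ε)²/Δ²)·log( (2·c_ε·K/δ)·log( 2·c_ε·K·(1+√ε)²·(1+ε)²/(δ·Δ²) ) ). -/

import Mathlib

/-!
Write `b = Δ² / (2(1+ε)(1+√ε)²)`, `C = c K / δ` and `M = (1+ε) C / b`. The hypothesis reads
`b t ≤ log (C log ((1+ε) t))`. Bounding the inner `log` by its argument gives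
`b t ≤ log M + log (b t)`, hence the crude bound `b t ≤ 2 log M`, i.e. `(1+ε) t ≤ M²` as soon as
`C ≥ 2`. Feeding `log ((1+ε) t) ≤ 2 log M` back into the hypothesis yields
`b t ≤ log (2 C log M)`, which is the claim.
-/

open Real

lemma le_two_mul_of_le_add_log {s L : ℝ} (hs : 0 < s) (h : s ≤ L + log s) : s ≤ 2 * L := by
  have hhalf : log (s / 2) ≤ s / 2 - 1 := log_le_sub_one_of_pos (half_pos hs)
  rw [log_div hs.ne' two_ne_zero] at hhalf
  have hlog2 : log 2 < 1 := log_two_lt_d9.trans (by norm_num)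
  linarith

lemma mul_le_log_two_mul_log_of_mul_le_log_mul_log {a b C t : ℝ} (ha : 0 < a) (hb : 0 < b)
    (hC : 2 ≤ C) (hat : 1 < a * t) (h : b * t ≤ log (C * log (a * t))) :
    b * t ≤ log (2 * C * log (a * C / b)) := by
  set M := a * C / b with hM
  have ht : 0 < t := pos_of_mul_pos_right (one_pos.trans hat) ha.le
  have hbt : 0 < b * t := mul_pos hb ht
  have hM0 : 0 < M := by positivity
  have hinner : 0 < C * log (a * t) := mul_pos (by linarith) (log_pos hat)
  have hcrude : b * t ≤ 2 * log M := by
    refine le_two_mul_of_le_add_log hbt (h.trans ?_)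
    rw [← log_mul hM0.ne' hbt.ne']
    refine log_le_log hinner ?_
    calc C * log (a * t) ≤ C * (a * t) :=
          mul_le_mul_of_nonneg_left (log_le_self (by positivity)) (by linarith)
      _ = M * (b * t) := by rw [hM]; field_simp
  have hlogM : 0 ≤ log M := by linarith
  have hatM : a * t ≤ M * M :=
    calc a * t = M * (b * t) / C := by rw [hM]; field_simp
      _ ≤ M * (2 * log M) / 2 := by gcongr
      _ = M * log M := by ring
      _ ≤ M * M := by gcongr; exact log_le_self hM0.le
  calc b * t ≤ log (C * log (a * t)) := h
    _ ≤ log (2 * C * log M) := by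
        refine log_le_log hinner ?_
        calc C * log (a * t) ≤ C * log (M * M) := by gcongr
          _ = 2 * C * log M := by rw [log_mul hM0.ne' hM0.ne']; ring

theorem lil_radius_inversion (ε δ c Δ t : ℝ) (K : ℕ)
    (hε : ε ∈ Set.Ioo (0:ℝ) 1) (hδ : δ ∈ Set.Ioc (0:ℝ) (Real.exp 1)⁻¹)
    (hK : 1 ≤ K) (hc : 1 ≤ c) (hΔ : Δ ∈ Set.Ioc (0:ℝ) 1) (ht : 1 ≤ t)
    (h : Δ ^ 2 / (2 * (1 + ε) * (1 + Real.sqrt ε) ^ 2) ≤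
        (1 / t) * Real.log (c * K * Real.log ((1 + ε) * t) / δ)) :
    t ≤ (2 * (1 + ε) * (1 + Real.sqrt ε) ^ 2 / Δ ^ 2) *
      Real.log ((2 * c * K / δ) *
        Real.log (2 * c * K * (1 + Real.sqrt ε) ^ 2 * (1 + ε) ^ 2 / (δ * Δ ^ 2))) := by
  obtain ⟨hε0, -⟩ := hε
  obtain ⟨hδ0, hδe⟩ := hδ
  have hA : 0 < 2 * (1 + ε) * (1 + √ε) ^ 2 := by positivity
  have hb : 0 < Δ ^ 2 / (2 * (1 + ε) * (1 + √ε) ^ 2) := div_pos (pow_pos hΔ.1 2) hA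
  have hC : 2 ≤ c * K / δ := by
    have hcK : (1 : ℝ) ≤ c * K := one_le_mul_of_one_le_of_one_le hc (by exact_mod_cast hK)
    calc (2 : ℝ) ≤ exp 1 := by linarith [add_one_le_exp (1 : ℝ)]
      _ ≤ δ⁻¹ := (le_inv_comm₀ (exp_pos 1) hδ0).mpr hδe
      _ ≤ c * K / δ := by rw [div_eq_mul_inv]; exact le_mul_of_one_le_left (by positivity) hcK
  have hbt := mul_le_log_two_mul_log_of_mul_le_log_mul_log (a := 1 + ε) (t := t) (by linarith)
    hb hC (by nlinarith)
    (by rw [mul_div_right_comm] at h; rwa [one_div_mul_eq_div, le_div_iff₀ (by linarith)] at h)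
  rw [← le_div_iff₀' hb] at hbt
  refine hbt.trans_eq ?_
  rw [div_div_eq_mul_div, mul_div_assoc, mul_comm]
  congr 3
  · ring
  · field_simp
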